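/- Let 0 ≤ β < 1, and let n, b, k be positive integers with k·b = n. Then the square root factor C_{1,β} satisfies sens_{k,b}(C_{1,β})² ≤ k·(log n + 1)/(1 − β)² + 6·k²/(1 − β)², where log is the natural logarithm. -/

import Mathlib

open Finset Matrix

/-!
Write `G = CᵀC` for `C = C_{1,β}`. The coefficients `r_m` are antitone, supermultiplicative
(`r_a r_c ≤ r_{a+c}`) and satisfy `r_m² ≤ 1/(m+1)`; supermultiplicativity and the geometric series
give `c_m ≤ r_m/(1-β)`. Hence `G_ii ≤ Σ_{m<n} r_m²/(1-β)² ≤ (log n + 1)/(1-β)²` and, for `j ≤ i`,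
`G_ij ≤ r_{i-j} Σ_{m<n} r_m/(1-β)² ≤ 2√n r_{i-j}/(1-β)²`.

For a `b`-separated `π`, the `ℓ`-th point of `π` below `i` lies at distance at least `bℓ` from `i`,
so `Σ_{i,j∈π, j<i} r_{i-j} ≤ Σ_{a<k} Σ_{ℓ<a} 1/√(b(ℓ+1)) ≤ (4/3)k√k/√b`. Counting the pairs
`j > i` by symmetry, the off-diagonal part is at most `(16/3)k√k√n/(√b(1-β)²) = (16/3)k²/(1-β)²`
when `n = kb`.
-/

/-- `r_m = (1/4^m)·C(2m,m)`. -/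
noncomputable def rCoef (m : ℕ) : ℝ := (1 / 4 ^ m) * (Nat.choose (2 * m) m : ℝ)

/-- `c_m = Σ_{i=0}^{m} r_{m−i} r_i β^i` (the `α = 1` case). -/
noncomputable def cCoef1 (β : ℝ) (m : ℕ) : ℝ :=
  ∑ i ∈ Finset.range (m + 1), rCoef (m - i) * rCoef i * β ^ i

/-- The square root factor `C_{1,β}`, lower triangular Toeplitz with entries `c_{i-j}`. -/
noncomputable def Cmat1 (n : ℕ) (β : ℝ) : Matrix (Fin n) (Fin n) ℝ :=
  Matrix.of fun i j => if (j : ℕ) ≤ (i : ℕ) then cCoef1 β ((i : ℕ) - (j : ℕ)) else 0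

/-- The `b`-min-separated `L2`-sensitivity with at most `k` participations. -/
noncomputable def sens (n b k : ℕ) (C : Matrix (Fin n) (Fin n) ℝ) : ℝ :=
  Real.sqrt (sSup { x : ℝ | ∃ π : Finset (Fin n), π.card ≤ k ∧
    (∀ i ∈ π, ∀ j ∈ π, i ≠ j → b ≤ Nat.dist (i : ℕ) (j : ℕ)) ∧
    x = ∑ i ∈ π, ∑ j ∈ π, (Cᵀ * C) i j })

lemma rCoef_pos (m : ℕ) : 0 < rCoef m := by
  unfold rCoef
  have : 0 < (2 * m).choose m := Nat.choose_pos (by omega)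
  positivity

lemma rCoef_succ (m : ℕ) : rCoef (m + 1) = rCoef m * ((2 * m + 1) / (2 * m + 2)) := by
  have h : ((m + 1 : ℕ) : ℝ) * (m + 1).centralBinom = 2 * (2 * m + 1) * m.centralBinom := by
    exact_mod_cast Nat.succ_mul_centralBinom_succ m
  simp only [rCoef, ← Nat.centralBinom_eq_two_mul_choose]
  push_cast at h
  field_simp
  linear_combination 2 * (4 : ℝ) ^ m * h

lemma rCoef_succ_le (m : ℕ) : rCoef (m + 1) ≤ rCoef m := by
  rw [rCoef_succ]
  exact mul_le_of_le_one_right (rCoef_pos m).le (by rw [div_le_one (by positivity)]; linarith)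

lemma rCoef_antitone : Antitone rCoef := antitone_nat_of_succ_le rCoef_succ_le

lemma rCoef_mul_le (a c : ℕ) : rCoef a * rCoef c ≤ rCoef (a + c) := by
  induction c with
  | zero => simp [rCoef]
  | succ c ih =>
    have hratio :
        (2 * (c : ℝ) + 1) / (2 * c + 2) ≤ (2 * ((a + c : ℕ) : ℝ) + 1) / (2 * (a + c : ℕ) + 2) := by
      rw [div_le_div_iff₀ (by positivity) (by positivity)]
      push_cast
      nlinarith [(a.cast_nonneg : (0 : ℝ) ≤ a)]
    calc rCoef a * rCoef (c + 1) = rCoef a * rCoef c * ((2 * c + 1) / (2 * c + 2)) := by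
          rw [rCoef_succ]; ring
      _ ≤ rCoef (a + c) * ((2 * ((a + c : ℕ) : ℝ) + 1) / (2 * (a + c : ℕ) + 2)) :=
          mul_le_mul ih hratio (by positivity) (rCoef_pos _).le
      _ = rCoef (a + (c + 1)) := (rCoef_succ (a + c)).symm

lemma rCoef_sq_le (m : ℕ) : rCoef m ^ 2 ≤ 1 / (m + 1) := by
  induction m with
  | zero => simp [rCoef]
  | succ m ih =>
    rw [rCoef_succ, mul_pow]
    have hratio : ((2 * (m : ℝ) + 1) / (2 * m + 2)) ^ 2 * (1 / (m + 1)) ≤ 1 / (m + 1 + 1) := by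
      rw [div_pow, div_mul_div_comm, div_le_div_iff₀ (by positivity) (by positivity)]
      nlinarith [(m.cast_nonneg : (0 : ℝ) ≤ m)]
    push_cast
    calc rCoef m ^ 2 * ((2 * (m : ℝ) + 1) / (2 * m + 2)) ^ 2
        ≤ 1 / ((m : ℝ) + 1) * ((2 * (m : ℝ) + 1) / (2 * m + 2)) ^ 2 := by gcongr
      _ ≤ 1 / ((m : ℝ) + 1 + 1) := by rwa [mul_comm]

lemma rCoef_le_inv_sqrt (m : ℕ) : rCoef m ≤ (Real.sqrt (m + 1))⁻¹ := by
  rw [← Real.sqrt_inv, ← one_div]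
  exact Real.le_sqrt_of_sq_le (rCoef_sq_le m)

lemma sum_inv_sqrt_le (n : ℕ) : ∑ m ∈ range n, (Real.sqrt (m + 1))⁻¹ ≤ 2 * Real.sqrt n := by
  induction n with
  | zero => simp
  | succ n ih =>
    rw [sum_range_succ]
    have hn := Real.sq_sqrt (n.cast_nonneg : (0 : ℝ) ≤ n)
    have hn1 := Real.sq_sqrt (by positivity : (0 : ℝ) ≤ n + 1)
    have hpos : 0 < Real.sqrt (n + 1) := by positivity
    have step : (Real.sqrt (n + 1))⁻¹ ≤ 2 * Real.sqrt (n + 1) - 2 * Real.sqrt n := by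
      rw [inv_le_iff_one_le_mul₀' hpos]
      nlinarith [sq_nonneg (Real.sqrt (n + 1) - Real.sqrt n)]
    push_cast
    linarith

lemma sum_sqrt_le (K : ℕ) : ∑ a ∈ range K, Real.sqrt a ≤ 2 / 3 * K * Real.sqrt K := by
  induction K with
  | zero => simp
  | succ K ih =>
    rw [sum_range_succ]
    have hK := Real.sq_sqrt (K.cast_nonneg : (0 : ℝ) ≤ K)
    have hK1 := Real.sq_sqrt (by positivity : (0 : ℝ) ≤ K + 1)
    have step : Real.sqrt K ≤ 2 / 3 * (K + 1) * Real.sqrt (K + 1) - 2 / 3 * K * Real.sqrt K := by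
      nlinarith [sq_nonneg (Real.sqrt (K + 1) - Real.sqrt K), Real.sqrt_nonneg K,
        Real.sqrt_nonneg (K + 1), mul_nonneg (Real.sqrt_nonneg K) (Real.sqrt_nonneg (K + 1))]
    push_cast
    linarith

lemma sum_rCoef_sq_le (n : ℕ) : ∑ m ∈ range n, rCoef m ^ 2 ≤ Real.log n + 1 := by
  calc ∑ m ∈ range n, rCoef m ^ 2 ≤ ∑ m ∈ range n, ((m + 1 : ℕ) : ℝ)⁻¹ :=
        sum_le_sum fun m _ => by simpa using rCoef_sq_le m
    _ = harmonic n := by simp [harmonic]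
    _ ≤ Real.log n + 1 := by linarith [harmonic_le_one_add_log n]

lemma sum_rCoef_le (n : ℕ) : ∑ m ∈ range n, rCoef m ≤ 2 * Real.sqrt n :=
  (sum_le_sum fun m _ => rCoef_le_inv_sqrt m).trans (sum_inv_sqrt_le n)

lemma sum_sum_eq_sum_diag_add_two_mul_sum_lt {ι R : Type*} [LinearOrder ι] [NonAssocSemiring R]
    (s : Finset ι) {A : ι → ι → R} (hA : ∀ i j, A i j = A j i) :
    ∑ i ∈ s, ∑ j ∈ s, A i j = ∑ i ∈ s, A i i + 2 * ∑ i ∈ s, ∑ j ∈ s with j < i, A i j := by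
  have htri : ∀ i j, A i j = (if j < i then A i j else 0) + (if i = j then A i j else 0)
      + (if i < j then A i j else 0) := by
    intro i j
    rcases lt_trichotomy i j with h | rfl | h
    · simp [h, h.ne, h.not_gt]
    · simp
    · simp [h, h.ne', h.not_gt]
  have hupper : ∑ i ∈ s, ∑ j ∈ s, (if i < j then A i j else 0)
      = ∑ i ∈ s, ∑ j ∈ s, (if j < i then A i j else 0) := by
    rw [sum_comm]
    simp only [hA]
  rw [sum_congr rfl fun i _ => sum_congr rfl fun j _ => htri i j]
  simp only [sum_add_distrib, hupper, sum_ite_eq, sum_ite_mem, inter_self, sum_filter]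
  rw [two_mul]
  abel

lemma sum_ite_le_sum_range {f : ℕ → ℝ} (hf : ∀ m, 0 ≤ f m) (i n : ℕ) :
    ∑ t : Fin n, (if i ≤ (t : ℕ) then f (t - i) else 0) ≤ ∑ m ∈ range n, f m := by
  rw [Fin.sum_univ_eq_sum_range (fun t => if i ≤ t then f (t - i) else 0), ← sum_filter]
  have hfilter : {t ∈ range n | i ≤ t} = Ico i n := by
    ext t; simp only [mem_filter, mem_range, mem_Ico]; omega
  rw [hfilter, sum_Ico_eq_sum_range]
  simp only [Nat.add_sub_cancel_left]
  exact sum_le_sum_of_subset_of_nonneg (range_subset_range.mpr (Nat.sub_le n i)) fun m _ _ => hf m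

section
variable {ι : Type*} [LinearOrder ι] {p : ι → ℕ} {b : ℕ}

lemma sum_antitone_le_of_separated {S : Finset ι}
    (hS : ∀ i ∈ S, ∀ j ∈ S, j < i → p j + b ≤ p i) :
    ∀ {g : ℕ → ℝ}, Antitone g → ∀ {x : ℕ}, (∀ j ∈ S, p j + b ≤ x) →
      ∑ j ∈ S, g (x - p j) ≤ ∑ ℓ ∈ range #S, g (b * (ℓ + 1)) := by
  induction S using Finset.induction_on_max with
  | empty => simp
  | insert m s hm ih =>
    intro g hg x hx
    have hms : m ∉ s := fun h => (hm m h).false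
    have hsep : ∀ i ∈ s, ∀ j ∈ s, j < i → p j + b ≤ p i := fun i hi j hj =>
      hS i (mem_insert_of_mem hi) j (mem_insert_of_mem hj)
    have hxm := hx m (mem_insert_self m s)
    have hshift : ∑ j ∈ s, g (x - p j) ≤ ∑ ℓ ∈ range #s, g (b * (ℓ + 1) + b) := by
      refine (sum_le_sum fun j hj => hg ?_).trans
        (ih hsep (g := fun y => g (y + b)) (fun y z hyz => hg (by omega)) fun j hj =>
          hS m (mem_insert_self m s) j (mem_insert_of_mem hj) (hm j hj))
      have := hS m (mem_insert_self m s) j (mem_insert_of_mem hj) (hm j hj)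
      omega
    rw [sum_insert hms, card_insert_of_notMem hms, sum_range_succ', add_comm]
    have hnear : g (x - p m) ≤ g b := hg (by omega)
    simp only [mul_add, mul_one, zero_add] at hshift ⊢
    linarith

lemma sum_sum_antitone_le_of_separated {g : ℕ → ℝ} (hg : Antitone g) {S : Finset ι}
    (hS : ∀ i ∈ S, ∀ j ∈ S, j < i → p j + b ≤ p i) :
    ∑ i ∈ S, ∑ j ∈ S with j < i, g (p i - p j)
      ≤ ∑ a ∈ range #S, ∑ ℓ ∈ range a, g (b * (ℓ + 1)) := by
  induction S using Finset.induction_on_max with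
  | empty => simp
  | insert m s hm ih =>
    have hms : m ∉ s := fun h => (hm m h).false
    have hsep : ∀ i ∈ s, ∀ j ∈ s, j < i → p j + b ≤ p i := fun i hi j hj =>
      hS i (mem_insert_of_mem hi) j (mem_insert_of_mem hj)
    have hbelow_m : {j ∈ insert m s | j < m} = s := by
      ext j; simp only [mem_filter, mem_insert]
      constructor
      · rintro ⟨rfl | hj, hjm⟩
        · exact absurd hjm (lt_irrefl _)
        · exact hj
      · exact fun hj => ⟨Or.inr hj, hm j hj⟩
    have hbelow : ∑ i ∈ s, ∑ j ∈ insert m s with j < i, g (p i - p j)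
        = ∑ i ∈ s, ∑ j ∈ s with j < i, g (p i - p j) := sum_congr rfl fun i hi => by
      rw [filter_insert, if_neg (hm i hi).not_gt]
    rw [sum_insert hms, card_insert_of_notMem hms, sum_range_succ, hbelow_m, hbelow, add_comm]
    exact add_le_add (ih hsep) (sum_antitone_le_of_separated hsep hg fun j hj =>
      hS m (mem_insert_self m s) j (mem_insert_of_mem hj) (hm j hj))
end

lemma sum_sum_rCoef_le {b : ℕ} (hb : 0 < b) (K : ℕ) :
    ∑ a ∈ range K, ∑ ℓ ∈ range a, rCoef (b * (ℓ + 1)) ≤ 4 / 3 * K * Real.sqrt K / Real.sqrt b := by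
  have hterm : ∀ ℓ : ℕ, rCoef (b * (ℓ + 1)) ≤ (Real.sqrt b)⁻¹ * (Real.sqrt (ℓ + 1))⁻¹ := by
    intro ℓ
    rw [← mul_inv, ← Real.sqrt_mul (Nat.cast_nonneg _)]
    refine (rCoef_le_inv_sqrt _).trans (inv_anti₀ (by positivity) (Real.sqrt_le_sqrt ?_))
    push_cast
    linarith
  calc ∑ a ∈ range K, ∑ ℓ ∈ range a, rCoef (b * (ℓ + 1))
      ≤ ∑ a ∈ range K, (Real.sqrt b)⁻¹ * (2 * Real.sqrt a) := by
        refine sum_le_sum fun a _ => (sum_le_sum fun ℓ _ => hterm ℓ).trans ?_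
        rw [← mul_sum]
        exact mul_le_mul_of_nonneg_left (sum_inv_sqrt_le a) (by positivity)
    _ ≤ (Real.sqrt b)⁻¹ * (2 * (2 / 3 * K * Real.sqrt K)) := by
        rw [← mul_sum, ← mul_sum]
        gcongr
        exact sum_sqrt_le K
    _ = 4 / 3 * K * Real.sqrt K / Real.sqrt b := by ring

section
variable {β : ℝ} {n : ℕ}

lemma cCoef1_nonneg (hβ : 0 ≤ β) (m : ℕ) : 0 ≤ cCoef1 β m :=
  sum_nonneg fun i _ => by have := rCoef_pos (m - i); have := rCoef_pos i; positivity

lemma cCoef1_le_rCoef_div (hβ0 : 0 ≤ β) (hβ1 : β < 1) (m : ℕ) :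
    cCoef1 β m ≤ rCoef m / (1 - β) := by
  calc cCoef1 β m ≤ ∑ i ∈ range (m + 1), rCoef m * β ^ i := by
        refine sum_le_sum fun i hi => mul_le_mul_of_nonneg_right ?_ (by positivity)
        simpa [Nat.sub_add_cancel (mem_range_succ_iff.mp hi)] using rCoef_mul_le (m - i) i
    _ = rCoef m * ∑ i ∈ range (m + 1), β ^ i := by rw [mul_sum]
    _ ≤ rCoef m * (1 / (1 - β)) := by
        refine mul_le_mul_of_nonneg_left ?_ (rCoef_pos m).le
        have := (geom_sum_Ico_le_of_lt_one hβ0 hβ1 : ∑ i ∈ Ico 0 (m + 1), β ^ i ≤ β ^ 0 / (1 - β))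
        rwa [← range_eq_Ico, pow_zero] at this
    _ = rCoef m / (1 - β) := mul_one_div _ _

lemma gram_Cmat1_apply_le (hβ0 : 0 ≤ β) (hβ1 : β < 1) {i j : Fin n} (hji : j ≤ i) :
    ((Cmat1 n β)ᵀ * Cmat1 n β) i j
      ≤ (∑ m ∈ range n, rCoef m * rCoef (m + (i - j))) / (1 - β) ^ 2 := by
  have hβ : 0 < 1 - β := by linarith
  have hterm : ∀ t : Fin n, (Cmat1 n β)ᵀ i t * Cmat1 n β t j
      ≤ if (i : ℕ) ≤ t then rCoef (t - i) * rCoef (t - i + (i - j)) / (1 - β) ^ 2 else 0 := by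
    intro t
    simp only [transpose_apply, Cmat1, of_apply]
    split_ifs with hit hjt hjt
    · rw [show (t : ℕ) - i + (i - j) = t - j by omega, pow_two, ← div_mul_div_comm]
      exact mul_le_mul (cCoef1_le_rCoef_div hβ0 hβ1 _) (cCoef1_le_rCoef_div hβ0 hβ1 _)
        (cCoef1_nonneg hβ0 _) (div_nonneg (rCoef_pos _).le hβ.le)
    · omega
    · simp
    · simp
  rw [mul_apply, sum_div]
  exact (sum_le_sum fun t _ => hterm t).trans
    (sum_ite_le_sum_range (f := fun m => rCoef m * rCoef (m + (i - j)) / (1 - β) ^ 2)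
      (fun m => div_nonneg (mul_nonneg (rCoef_pos _).le (rCoef_pos _).le) (sq_nonneg _)) i n)

lemma gram_Cmat1_diag_le (hβ0 : 0 ≤ β) (hβ1 : β < 1) (i : Fin n) :
    ((Cmat1 n β)ᵀ * Cmat1 n β) i i ≤ (Real.log n + 1) / (1 - β) ^ 2 := by
  refine (gram_Cmat1_apply_le hβ0 hβ1 le_rfl).trans ?_
  simp only [Nat.sub_self, add_zero, ← pow_two]
  gcongr
  exact sum_rCoef_sq_le n

lemma gram_Cmat1_le_rCoef (hβ0 : 0 ≤ β) (hβ1 : β < 1) {i j : Fin n} (hji : j ≤ i) :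
    ((Cmat1 n β)ᵀ * Cmat1 n β) i j ≤ 2 * Real.sqrt n / (1 - β) ^ 2 * rCoef (i - j) := by
  refine (gram_Cmat1_apply_le hβ0 hβ1 hji).trans ?_
  rw [div_mul_eq_mul_div, mul_comm _ (rCoef _)]
  gcongr
  calc ∑ m ∈ range n, rCoef m * rCoef (m + (i - j)) ≤ ∑ m ∈ range n, rCoef m * rCoef (i - j) :=
        sum_le_sum fun m _ => mul_le_mul_of_nonneg_left (rCoef_antitone (Nat.le_add_left _ _))
          (rCoef_pos m).le
    _ = rCoef (i - j) * ∑ m ∈ range n, rCoef m := by rw [← sum_mul, mul_comm]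
    _ ≤ rCoef (i - j) * (2 * Real.sqrt n) := by
        gcongr
        · exact (rCoef_pos _).le
        · exact sum_rCoef_le n

lemma two_mul_sum_sum_lt_gram_Cmat1_le (hβ0 : 0 ≤ β) (hβ1 : β < 1) {b k : ℕ} (hb : 0 < b)
    (hkb : k * b = n) {π : Finset (Fin n)} (hπ : #π ≤ k)
    (hsep : ∀ i ∈ π, ∀ j ∈ π, j < i → (j : ℕ) + b ≤ i) :
    2 * ∑ i ∈ π, ∑ j ∈ π with j < i, ((Cmat1 n β)ᵀ * Cmat1 n β) i j
      ≤ 6 * (k : ℝ) ^ 2 / (1 - β) ^ 2 := by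
  have hsqrt : Real.sqrt n = Real.sqrt k * Real.sqrt b := by
    rw [← hkb, Nat.cast_mul, Real.sqrt_mul (Nat.cast_nonneg _)]
  have hsum :
      ∑ i ∈ π, ∑ j ∈ π with j < i, rCoef (i - j) ≤ 4 / 3 * k * Real.sqrt k / Real.sqrt b :=
    calc _ ≤ 4 / 3 * #π * Real.sqrt #π / Real.sqrt b :=
          (sum_sum_antitone_le_of_separated (p := Fin.val) rCoef_antitone hsep).trans
            (sum_sum_rCoef_le hb _)
      _ ≤ 4 / 3 * k * Real.sqrt k / Real.sqrt b := by gcongr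
  calc 2 * ∑ i ∈ π, ∑ j ∈ π with j < i, ((Cmat1 n β)ᵀ * Cmat1 n β) i j
      ≤ 2 * (2 * Real.sqrt n / (1 - β) ^ 2 * ∑ i ∈ π, ∑ j ∈ π with j < i, rCoef (i - j)) := by
        simp only [mul_sum]
        gcongr with i _ j hj
        exact gram_Cmat1_le_rCoef hβ0 hβ1 (mem_filter.1 hj).2.le
    _ ≤ 2 * (2 * Real.sqrt n / (1 - β) ^ 2 * (4 / 3 * k * Real.sqrt k / Real.sqrt b)) := by
        gcongr
    _ = 16 / 3 * (k : ℝ) ^ 2 / (1 - β) ^ 2 := by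
        rw [hsqrt]
        field_simp
        rw [Real.sq_sqrt (Nat.cast_nonneg _)]
        ring
    _ ≤ 6 * (k : ℝ) ^ 2 / (1 - β) ^ 2 := by gcongr; norm_num

lemma sum_sum_gram_Cmat1_le (hβ0 : 0 ≤ β) (hβ1 : β < 1) {b k : ℕ} (hb : 0 < b) (hkb : k * b = n)
    {π : Finset (Fin n)} (hπ : #π ≤ k)
    (hsep : ∀ i ∈ π, ∀ j ∈ π, i ≠ j → b ≤ Nat.dist (i : ℕ) (j : ℕ)) :
    ∑ i ∈ π, ∑ j ∈ π, ((Cmat1 n β)ᵀ * Cmat1 n β) i j ≤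
      (k : ℝ) * (Real.log n + 1) / (1 - β) ^ 2 + 6 * (k : ℝ) ^ 2 / (1 - β) ^ 2 := by
  have hsep' : ∀ i ∈ π, ∀ j ∈ π, j < i → (j : ℕ) + b ≤ i := fun i hi j hj hji => by
    have := hsep j hj i hi hji.ne
    rw [Nat.dist_eq_sub_of_le hji.le] at this
    omega
  have hdiag : ∑ i ∈ π, ((Cmat1 n β)ᵀ * Cmat1 n β) i i ≤ k * (Real.log n + 1) / (1 - β) ^ 2 := by
    have hlog : 0 ≤ (Real.log n + 1) / (1 - β) ^ 2 := by
      have := Real.log_natCast_nonneg n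
      positivity
    calc ∑ i ∈ π, ((Cmat1 n β)ᵀ * Cmat1 n β) i i ≤ ∑ i ∈ π, (Real.log n + 1) / (1 - β) ^ 2 :=
          sum_le_sum fun i _ => gram_Cmat1_diag_le hβ0 hβ1 i
      _ = #π * ((Real.log n + 1) / (1 - β) ^ 2) := by rw [sum_const, nsmul_eq_mul]
      _ ≤ k * ((Real.log n + 1) / (1 - β) ^ 2) := by gcongr
      _ = k * (Real.log n + 1) / (1 - β) ^ 2 := (mul_div_assoc _ _ _).symm
  rw [sum_sum_eq_sum_diag_add_two_mul_sum_lt π fun i j =>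
    (isSymm_transpose_mul_self (Cmat1 n β)).apply j i]
  exact add_le_add hdiag (two_mul_sum_sum_lt_gram_Cmat1_le hβ0 hβ1 hb hkb hπ hsep')
end

theorem sens_square_root_upper_bound_general (β : ℝ) (hβ0 : 0 ≤ β) (hβ1 : β < 1)
    (n b k : ℕ) (hb : 1 ≤ b) (hkb : k * b = n) :
    sens n b k (Cmat1 n β) ^ 2 ≤
      (k : ℝ) * (Real.log n + 1) / (1 - β) ^ 2 + 6 * (k : ℝ) ^ 2 / (1 - β) ^ 2 := by
  have hbound : 0 ≤ (k : ℝ) * (Real.log n + 1) / (1 - β) ^ 2 + 6 * (k : ℝ) ^ 2 / (1 - β) ^ 2 := by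
    have := Real.log_natCast_nonneg n
    positivity
  unfold sens
  refine (pow_le_pow_left₀ (Real.sqrt_nonneg _) (Real.sqrt_le_sqrt (Real.sSup_le ?_ hbound)) 2)
    |>.trans_eq (Real.sq_sqrt hbound)
  rintro x ⟨π, hπ, hsep, rfl⟩
  exact sum_sum_gram_Cmat1_le hβ0 hβ1 hb hkb hπ hsep

/-- for `k·b = n`,
`sens_{k,b}(C_{1,β})² ≤ k·(log n + 1)/(1 − β)² + 6·k²/(1 − β)²`. -/
theorem sens_square_root_upper_bound (β : ℝ) (hβ0 : 0 ≤ β) (hβ1 : β < 1)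
    (n b k : ℕ) (hn : 1 ≤ n) (hb : 1 ≤ b) (hk : 1 ≤ k) (hkb : k * b = n) :
    sens n b k (Cmat1 n β) ^ 2 ≤
      (k : ℝ) * (Real.log n + 1) / (1 - β) ^ 2 + 6 * (k : ℝ) ^ 2 / (1 - β) ^ 2 :=
  sens_square_root_upper_bound_general β hβ0 hβ1 n b k hb hkb
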